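/- If P is a minimum-delay directed path from x to y, then every edge of P is essential; consequently, for every pair of nodes x, y joined by a directed path in G, the minimum delay from x to y within the subgraph H* equals the minimum delay from x to y in G. -/

import Mathlib

/-- A directed path (with at least one edge) from `x` to `y` in the directed graph with
edge relation `E`, represented as the list of its vertices. -/
def IsDipath {V : Type*} (E : V → V → Prop) (x y : V) (p : List V) : Prop :=
  2 ≤ p.length ∧ p.head? = some x ∧ p.getLast? = some y ∧ p.Chain' E

/-- The delay of a directed path: the sum of the delays `δ` of its edges. -/
noncomputable def pathDelay {V : Type*} (δ : V → V → ℝ) (p : List V) : ℝ :=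
  ((p.zip p.tail).map fun q => δ q.1 q.2).sum

/-- `p` is a minimum-delay directed path from `x` to `y`: its delay is at most the delay
of every directed path from `x` to `y`. -/
def IsMinDelayPath {V : Type*} (E : V → V → Prop) (δ : V → V → ℝ) (x y : V)
    (p : List V) : Prop :=
  IsDipath E x y p ∧ ∀ q, IsDipath E x y q → pathDelay δ p ≤ pathDelay δ q

/-- An edge `(v,w)` is essential (i.e. belongs to the aggregate backbone `H*`) if the
single-edge path `[v, w]` is a minimum-delay path from `v` to `w`. -/
def EssentialEdge {V : Type*} (E : V → V → Prop) (δ : V → V → ℝ) (v w : V) : Prop :=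
  E v w ∧ IsMinDelayPath E δ v w [v, w]

/-!
Optimal substructure: replacing a segment of a minimum-delay path by another path between the
same endpoints gives a path with the same ends, so every segment of a minimum-delay path is itself
a minimum-delay path; for a single-edge segment `[a, b]` this says exactly that `(a, b)` is
essential. Hence a minimum-delay path of `G` runs inside `H*`, and since `H*` has fewer paths it is
also a minimum-delay path there. Such a path exists in `G`: cutting out cycles does not increase
the delay (delays are nonnegative), and only finitely many paths have no repeated vertex after the
first.
-/

section

variable {V : Type*} {E E' : V → V → Prop} {δ : V → V → ℝ} {x y a b : V} {p : List V}

theorem List.exists_eq_append_cons_append_cons_of_not_nodup {α : Type*} {l : List α}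
    (h : ¬l.Nodup) : ∃ u a m w, l = u ++ a :: (m ++ a :: w) := by
  obtain ⟨a, ha⟩ := List.exists_duplicate_iff_not_nodup.2 h
  obtain ⟨r₁, r₂, rfl, har₁, har₂⟩ := List.cons_sublist_iff.1 (List.duplicate_iff_sublist.1 ha)
  obtain ⟨u, m, rfl⟩ := List.append_of_mem har₁
  obtain ⟨m', w, rfl⟩ := List.append_of_mem (List.singleton_sublist.1 har₂)
  exact ⟨u, a, m ++ m', w, by simp⟩

section PathDelay

variable (δ)

@[simp]
theorem pathDelay_singleton (a : V) : pathDelay δ [a] = 0 := by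
  simp [pathDelay]

theorem pathDelay_cons_cons (a b : V) (l : List V) :
    pathDelay δ (a :: b :: l) = δ a b + pathDelay δ (b :: l) := by
  simp [pathDelay]

theorem pathDelay_append_cons (u : List V) (a : V) (w : List V) :
    pathDelay δ (u ++ a :: w) = pathDelay δ (u ++ [a]) + pathDelay δ (a :: w) := by
  induction u using List.twoStepInduction with
  | nil => simp
  | singleton c => simp [pathDelay_cons_cons]
  | cons_cons c d u _ ih =>
    simp only [List.cons_append] at ih ⊢
    rw [pathDelay_cons_cons, pathDelay_cons_cons, ih d, add_assoc]

theorem pathDelay_splice (u m w : List V) (a b : V) :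
    pathDelay δ (u ++ a :: (m ++ b :: w)) =
      pathDelay δ (u ++ [a]) + pathDelay δ (a :: (m ++ [b])) + pathDelay δ (b :: w) := by
  rw [pathDelay_append_cons, ← List.cons_append, pathDelay_append_cons δ (a :: m) b w, add_assoc]
  rfl

end PathDelay

theorem pathDelay_nonneg (hδ : ∀ a b, E a b → 0 ≤ δ a b) :
    ∀ {l : List V}, l.IsChain E → 0 ≤ pathDelay δ l
  | [], _ => by simp [pathDelay]
  | [_], _ => by simp
  | a :: b :: l, h => by
    rw [pathDelay_cons_cons]
    obtain ⟨hab, hl⟩ := List.isChain_cons_cons.1 h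
    exact add_nonneg (hδ a b hab) (pathDelay_nonneg hδ hl)

theorem pathDelay_le_of_skip_cycle (hδ : ∀ a b, E a b → 0 ≤ δ a b) {u m w : List V} {v : V}
    (h : (u ++ v :: (m ++ v :: w)).IsChain E) :
    pathDelay δ (u ++ v :: w) ≤ pathDelay δ (u ++ v :: (m ++ v :: w)) := by
  have hcycle : (v :: (m ++ [v])).IsChain E := (List.isChain_split.1 h).2.infix ⟨[], w, by simp⟩
  rw [pathDelay_splice, pathDelay_append_cons]
  linarith [pathDelay_nonneg hδ hcycle]

theorem IsDipath.mono (hE : ∀ a b, E a b → E' a b) (hp : IsDipath E x y p) :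
    IsDipath E' x y p :=
  ⟨hp.1, hp.2.1, hp.2.2.1, hp.2.2.2.imp hE⟩

theorem IsDipath.exists_eq_cons_append_singleton (hp : IsDipath E x y p) :
    ∃ m, p = x :: (m ++ [y]) := by
  obtain ⟨hlen, hx, hy, -⟩ := hp
  obtain ⟨l, rfl⟩ := List.getLast?_eq_some_iff.1 hy
  cases l with
  | nil => simp at hlen
  | cons c m => exact ⟨m, by simp_all⟩

theorem isDipath_pair (hab : E a b) : IsDipath E a b [a, b] :=
  ⟨le_rfl, rfl, rfl, List.isChain_pair.2 hab⟩

theorem IsDipath.skip_cycle {u m w : List V} {v : V}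
    (hp : IsDipath E x y (u ++ v :: (m ++ v :: w))) (hlen : 2 ≤ (u ++ v :: w).length) :
    IsDipath E x y (u ++ v :: w) := by
  obtain ⟨-, hx, hy, hc⟩ := hp
  refine ⟨hlen, by cases u <;> simp_all, ?_, ?_⟩
  · rwa [List.getLast?_append_cons, ← List.cons_append, List.getLast?_append_cons,
      ← List.getLast?_append_cons u] at hy
  obtain ⟨hu, hvw⟩ := List.isChain_split.1 hc
  exact List.isChain_split.2 ⟨hu, (List.isChain_split.1 (List.cons_append ▸ hvw)).2⟩

theorem IsDipath.splice {u m n w : List V} (hp : IsDipath E x y (u ++ a :: (m ++ b :: w)))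
    (hq : IsDipath E a b (a :: (n ++ [b]))) : IsDipath E x y (u ++ a :: (n ++ b :: w)) := by
  obtain ⟨-, hx, hy, hc⟩ := hp
  refine ⟨by simp; omega, by cases u <;> simp_all, ?_, ?_⟩
  · rwa [List.getLast?_append_cons, ← List.cons_append, List.getLast?_append_cons,
      ← List.getLast?_append_cons (a :: n), List.cons_append,
      ← List.getLast?_append_cons u] at hy
  obtain ⟨hu, hamw⟩ := List.isChain_split.1 hc
  have hbw := (List.isChain_split.1 (List.cons_append ▸ hamw)).2
  exact List.isChain_split.2 ⟨hu, List.cons_append ▸ List.isChain_split.2 ⟨hq.2.2.2, hbw⟩⟩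

/-- Only the tail is required to be duplicate-free, so that closed paths (`x = y`) are covered. -/
theorem IsDipath.exists_tail_nodup (hδ : ∀ a b, E a b → 0 ≤ δ a b) (hp : IsDipath E x y p) :
    ∃ q, IsDipath E x y q ∧ q.tail.Nodup ∧ pathDelay δ q ≤ pathDelay δ p := by
  induction hn : p.length using Nat.strong_induction_on generalizing p with
  | _ n ih =>
  obtain ⟨t, rfl⟩ : ∃ t, p = x :: t :=
    let ⟨m, hm⟩ := hp.exists_eq_cons_append_singleton; ⟨_, hm⟩
  by_cases ht : t.Nodup
  · exact ⟨x :: t, hp, ht, le_rfl⟩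
  obtain ⟨u, v, m, w, rfl⟩ := List.exists_eq_append_cons_append_cons_of_not_nodup ht
  rw [← List.cons_append] at hp ⊢
  obtain ⟨q, hq, hqt, hqp⟩ :=
    ih _ (by subst hn; simp) (hp.skip_cycle (by simp; omega)) rfl
  exact ⟨q, hq, hqt, hqp.trans (pathDelay_le_of_skip_cycle hδ hp.2.2.2)⟩

theorem exists_isMinDelayPath [Fintype V] (hδ : ∀ a b, E a b → 0 ≤ δ a b)
    (h : ∃ p, IsDipath E x y p) : ∃ p, IsMinDelayPath E δ x y p := by
  set S := {q : List V | IsDipath E x y q ∧ q.tail.Nodup}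
  have hS : S.Finite := (List.finite_length_le V (Fintype.card V + 1)).subset fun q hq => by
    have := hq.2.length_le_card
    rw [List.length_tail] at this
    simp only [Set.mem_ofPred_eq]
    omega
  obtain ⟨p₀, hp₀⟩ := h
  obtain ⟨q₀, hq₀, hq₀t, -⟩ := hp₀.exists_tail_nodup hδ
  obtain ⟨p, ⟨hp, -⟩, hmin⟩ := S.exists_min_image (pathDelay δ) hS ⟨q₀, hq₀, hq₀t⟩
  refine ⟨p, hp, fun q hq => ?_⟩
  obtain ⟨q', hq', hq't, hq'q⟩ := hq.exists_tail_nodup hδ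
  exact (hmin q' ⟨hq', hq't⟩).trans hq'q

theorem IsMinDelayPath.mono (hE : ∀ a b, E' a b → E a b) (hp : IsMinDelayPath E δ x y p)
    (hp' : IsDipath E' x y p) : IsMinDelayPath E' δ x y p :=
  ⟨hp', fun q hq => hp.2 q (hq.mono hE)⟩

theorem IsMinDelayPath.of_infix {s : List V} (hp : IsMinDelayPath E δ x y p)
    (hs : IsDipath E a b s) (hsp : s <:+: p) : IsMinDelayPath E δ a b s := by
  refine ⟨hs, fun q hq => ?_⟩
  obtain ⟨m, rfl⟩ := hs.exists_eq_cons_append_singleton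
  obtain ⟨n, rfl⟩ := hq.exists_eq_cons_append_singleton
  obtain ⟨u, w, rfl⟩ := hsp
  have hp_eq : u ++ a :: (m ++ [b]) ++ w = u ++ a :: (m ++ b :: w) := by simp
  rw [hp_eq] at hp
  have hle := hp.2 _ (hp.1.splice hq)
  rw [pathDelay_splice, pathDelay_splice] at hle
  linarith

theorem IsMinDelayPath.essentialEdge (hp : IsMinDelayPath E δ x y p) (hab : [a, b] <:+: p) :
    EssentialEdge E δ a b := by
  have hE : E a b := List.isChain_pair.1 (hp.1.2.2.2.infix hab)
  exact ⟨hE, hp.of_infix (isDipath_pair hE) hab⟩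

theorem IsMinDelayPath.isDipath_essentialEdge (hp : IsMinDelayPath E δ x y p) :
    IsDipath (EssentialEdge E δ) x y p :=
  ⟨hp.1.1, hp.1.2.1, hp.1.2.2.1, (List.isChain_isInfix p).imp fun _ _ => hp.essentialEdge⟩

theorem IsMinDelayPath.sInf_pathDelay (hp : IsMinDelayPath E δ x y p) :
    sInf {d : ℝ | ∃ q, IsDipath E x y q ∧ pathDelay δ q = d} = pathDelay δ p :=
  IsLeast.csInf_eq ⟨⟨p, hp.1, rfl⟩, by rintro _ ⟨q, hq, rfl⟩; exact hp.2 q hq⟩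

end

/-- If `P` is a minimum-delay directed path from `x` to `y`, then every edge of `P` is
essential; consequently, for every pair of nodes `x, y` joined by a directed path in `G`,
the minimum delay from `x` to `y` within the aggregate backbone `H*` (the subgraph of
essential edges) equals the minimum delay from `x` to `y` in `G`. -/
theorem min_delay_paths_use_essential_edges_and_backbone_preserves_min_delay
    {V : Type*} [Fintype V] (E : V → V → Prop) (δ : V → V → ℝ)
    (hδ : ∀ a b, E a b → 0 < δ a b) :
    (∀ x y : V, ∀ p : List V, IsMinDelayPath E δ x y p →
      ∀ a b : V, [a, b] <:+: p → EssentialEdge E δ a b) ∧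
    (∀ x y : V, (∃ p, IsDipath E x y p) →
      sInf {d : ℝ | ∃ p, IsDipath (fun a b => EssentialEdge E δ a b) x y p ∧ pathDelay δ p = d}
        = sInf {d : ℝ | ∃ p, IsDipath E x y p ∧ pathDelay δ p = d}) := by
  refine ⟨fun x y p hp a b hab => hp.essentialEdge hab, fun x y hxy => ?_⟩
  obtain ⟨p, hp⟩ := exists_isMinDelayPath (fun a b hab => (hδ a b hab).le) hxy
  rw [(hp.mono (fun _ _ h => h.1) hp.isDipath_essentialEdge).sInf_pathDelay, hp.sInf_pathDelay]
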